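/- arXiv:1309.0827 — 4 statements merged into one kernel-verified Lean document; each statement's English description precedes it below -/
import Mathlib

section
/- Let φ : ℝⁿ \ {0} → ℝ be positively homogeneous of degree zero, differentiable away from the origin, and strictly positive. Then the map T(v) := φ(v)·v has Jacobian determinant det(J_v T) = φ(v)ⁿ at every nonzero point v. -/
/-- If `φ : ℝⁿ \ {0} → ℝ` is positively homogeneous of degree zero,
differentiable away from the origin, and strictly positive, then the map
`T v = φ v • v` has Jacobian determinant `φ(v)^n` at every nonzero `v`. -/
theorem jacobian_det_of_zero_homogeneous_scaling
    (n : ℕ) (φ : (Fin n → ℝ) → ℝ)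
    (hhom : ∀ v : Fin n → ℝ, v ≠ 0 → ∀ t : ℝ, 0 < t → φ (t • v) = φ v)
    (hdiff : ∀ v : Fin n → ℝ, v ≠ 0 → DifferentiableAt ℝ φ v)
    (hpos : ∀ v : Fin n → ℝ, v ≠ 0 → 0 < φ v)
    (v : Fin n → ℝ) (hv : v ≠ 0) :
    (Matrix.of fun i j : Fin n =>
      fderiv ℝ (fun w : Fin n → ℝ => φ w • w) v (Pi.single j 1) i).det
      = φ v ^ n := by
  set L := fderiv ℝ φ v with hL
  -- Euler relation: L v = 0
  have hEuler : L v = 0 := by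
    have hAt : HasFDerivAt φ L ((1:ℝ) • v) := by
      rw [one_smul]; exact (hdiff v hv).hasFDerivAt
    have hsmul : HasDerivAt (fun t : ℝ => t • v) v 1 := by
      simpa using (hasDerivAt_id (1:ℝ)).smul_const v
    have h1 : HasDerivAt (fun t : ℝ => φ (t • v)) (L v) 1 := by
      exact hAt.comp_hasDerivAt (1:ℝ) hsmul
    have h2 : (fun t : ℝ => φ (t • v)) =ᶠ[nhds (1:ℝ)] fun _ => φ v := by
      filter_upwards [eventually_gt_nhds (show (0:ℝ) < 1 by norm_num)] with t ht
      exact hhom v hv t ht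
    have h3 : HasDerivAt (fun _ : ℝ => φ v) (L v) 1 := h1.congr_of_eventuallyEq h2.symm
    have h4 : HasDerivAt (fun _ : ℝ => φ v) 0 1 := hasDerivAt_const _ _
    exact h3.unique h4
  -- derivative of T
  have hT : fderiv ℝ (fun w : Fin n → ℝ => φ w • w) v
      = φ v • ContinuousLinearMap.id ℝ (Fin n → ℝ) + L.smulRight v := by
    have := ((hdiff v hv).hasFDerivAt.smul
      (hasFDerivAt_id v)).fderiv
    exact this
  have hpv : φ v ≠ 0 := (hpos v hv).ne'
  have hmat : (Matrix.of fun i j : Fin n =>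
      fderiv ℝ (fun w : Fin n → ℝ => φ w • w) v (Pi.single j 1) i)
      = φ v • (1 + Matrix.replicateCol Unit ((φ v)⁻¹ • v) * Matrix.replicateRow Unit (fun j => L (Pi.single j 1))) := by
    ext i j
    rw [hT]
    simp only [Matrix.of_apply, ContinuousLinearMap.add_apply, ContinuousLinearMap.smul_apply,
      ContinuousLinearMap.coe_id', id_eq, Pi.add_apply, Pi.smul_apply, smul_eq_mul,
      ContinuousLinearMap.smulRight_apply, Matrix.smul_apply, Matrix.add_apply,
      Matrix.mul_apply, Matrix.replicateCol_apply, Matrix.replicateRow_apply, Finset.univ_unique,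
      Finset.sum_singleton, Matrix.one_apply]
    rcases eq_or_ne i j with h | h <;> simp [h, Pi.single_apply] <;> field_simp <;> ring
  rw [hmat, Matrix.det_smul, Matrix.det_one_add_replicateCol_mul_replicateRow]
  have hdot : dotProduct (fun j => L (Pi.single j 1)) ((φ v)⁻¹ • v) = 0 := by
    have hv' : L v = ∑ j, v j * L (Pi.single j 1) := by
      have : v = ∑ j, v j • (Pi.single j 1 : Fin n → ℝ) := by
        ext i
        simp [Pi.single_apply, eq_comm]
      conv_lhs => rw [this]
      simp [map_sum]
    simp only [dotProduct, Pi.smul_apply, smul_eq_mul]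
    rw [show ∑ j, L (Pi.single j 1) * ((φ v)⁻¹ * v j)
        = (φ v)⁻¹ * ∑ j, v j * L (Pi.single j 1) by rw [Finset.mul_sum]; congr 1; ext j; ring]
    rw [← hv', hEuler, mul_zero]
  rw [hdot]
  simp
end

section
/- Let Φ be a linear isometry of a Minkowski space with functional L, metric g, indicatrix ∂K, and induced volume form μ. Then the averaged inner product γ₁(v,w) := ∫_{∂K} g_u(v,w) dμ(u) is invariant: γ₁(Φ(v), Φ(w)) = γ₁(v,w) for all v, w ∈ ℝⁿ. -/
open MeasureTheory

/-- The Riemann–Finsler metric `g_{ij} = ∂²E/∂yʲ∂yⁱ` of the energy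
`E = L²/2` of a Minkowski functional `L`. -/
noncomputable def gmet (n : ℕ) (L : (Fin n → ℝ) → ℝ) (v : Fin n → ℝ) (i j : Fin n) : ℝ :=
  fderiv ℝ (fun u => fderiv ℝ (fun w => L w ^ 2 / 2) u (Pi.single i 1)) v (Pi.single j 1)

/-- `L` is a Finsler–Minkowski functional: positively `1`-homogeneous, positive
away from the origin, `C⁴` away from the origin, with positive definite
Hessian `gmet` of the energy `E = L²/2`. -/
def IsFinslerMinkowski (n : ℕ) (L : (Fin n → ℝ) → ℝ) : Prop :=
  (∀ v : Fin n → ℝ, v ≠ 0 → ∀ t : ℝ, 0 < t → L (t • v) = t * L v) ∧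
  (∀ v : Fin n → ℝ, v ≠ 0 → 0 < L v) ∧
  (∀ v : Fin n → ℝ, v ≠ 0 → ContDiffAt ℝ 4 L v) ∧
  (∀ v : Fin n → ℝ, v ≠ 0 → ∀ w : Fin n → ℝ, w ≠ 0 →
    0 < ∑ i, ∑ j, w i * w j * gmet n L v i j)

/-- The volume density `√(det g_{ij})`. -/
noncomputable def volDens (n : ℕ) (L : (Fin n → ℝ) → ℝ) (v : Fin n → ℝ) : ℝ :=
  Real.sqrt (Matrix.det (Matrix.of fun i j => gmet n L v i j))

/-- The averaged inner product `γ₁(v,w) = ∫_{∂K} g_u(v,w) μ`, written via the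
equivalent body integral `γ₁(v,w) = n ∫_K g_u(v,w) √(det g(u)) du`. -/
noncomputable def gammaOne (n : ℕ) (L : (Fin n → ℝ) → ℝ) (v w : Fin n → ℝ) : ℝ :=
  n * ∫ u in {u : Fin n → ℝ | L u ≤ 1},
    (∑ i, ∑ j, v i * w j * gmet n L u i j) * volDens n L u

/-! ### Auxiliary lemmas -/

private lemma single_expand (n : ℕ) (a : Fin n → ℝ) :
    a = ∑ i, a i • (Pi.single i 1 : Fin n → ℝ) := by
  ext j
  simp [Pi.single_apply]

private lemma diffD1 (n : ℕ) (L : (Fin n → ℝ) → ℝ) (hL : IsFinslerMinkowski n L)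
    {x : Fin n → ℝ} (hx : x ≠ 0) :
    DifferentiableAt ℝ (fderiv ℝ (fun w => L w ^ 2 / 2)) x := by
  have h4 : ContDiffAt ℝ 4 (fun w => L w ^ 2 / 2) x := ((hL.2.2.1 x hx).pow 2).div_const 2
  exact (h4.fderiv_right (m := 1) (by norm_num)).differentiableAt one_ne_zero

private lemma aux_key (n : ℕ) (L : (Fin n → ℝ) → ℝ) (hL : IsFinslerMinkowski n L)
    {x : Fin n → ℝ} (hx : x ≠ 0) (a b : Fin n → ℝ) :
    ∑ i, ∑ j, a i * b j * gmet n L x i j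
      = fderiv ℝ (fun y => fderiv ℝ (fun w => L w ^ 2 / 2) y a) x b := by
  classical
  have hD1 := diffD1 n L hL hx
  have hphi : ∀ d : Fin n → ℝ,
      DifferentiableAt ℝ (fun y => fderiv ℝ (fun w => L w ^ 2 / 2) y d) x :=
    fun d => hD1.clm_apply (differentiableAt_const d)
  have h1 : (fun y => fderiv ℝ (fun w => L w ^ 2 / 2) y a)
      = fun y => ∑ i, a i * fderiv ℝ (fun w => L w ^ 2 / 2) y (Pi.single i 1) := by
    funext y
    conv_lhs => rw [single_expand n a]
    rw [map_sum]
    simp [smul_eq_mul]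
  rw [h1, fderiv_fun_sum (fun i _ => (hphi (Pi.single i 1)).const_mul (a i)),
    ContinuousLinearMap.sum_apply]
  refine Finset.sum_congr rfl fun i _ => ?_
  rw [fderiv_const_mul (hphi _) (a i), ContinuousLinearMap.smul_apply, smul_eq_mul]
  have hb : (fderiv ℝ (fun y => fderiv ℝ (fun w => L w ^ 2 / 2) y (Pi.single i 1)) x) b
      = ∑ j, b j * gmet n L x i j := by
    conv_lhs => rw [single_expand n b]
    rw [map_sum]
    refine Finset.sum_congr rfl fun j _ => ?_
    rw [ContinuousLinearMap.map_smul, smul_eq_mul]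
    rfl
  rw [hb, Finset.mul_sum]
  exact Finset.sum_congr rfl fun j _ => by ring

private lemma aux_chain (n : ℕ) (L : (Fin n → ℝ) → ℝ) (hL : IsFinslerMinkowski n L)
    (Φ : (Fin n → ℝ) →ₗ[ℝ] (Fin n → ℝ))
    (hiso : ∀ v : Fin n → ℝ, L (Φ v) = L v)
    (hker : ∀ u : Fin n → ℝ, u ≠ 0 → Φ u ≠ 0)
    {x : Fin n → ℝ} (hx : x ≠ 0) (a b : Fin n → ℝ) :
    fderiv ℝ (fun y => fderiv ℝ (fun w => L w ^ 2 / 2) y a) x b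
      = fderiv ℝ (fun y => fderiv ℝ (fun w => L w ^ 2 / 2) y (Φ a)) (Φ x) (Φ b) := by
  have hΦx : Φ x ≠ 0 := hker x hx
  set Φ' : (Fin n → ℝ) →L[ℝ] (Fin n → ℝ) := LinearMap.toContinuousLinearMap Φ with hΦ'def
  have hE4 : ∀ z : Fin n → ℝ, z ≠ 0 → ContDiffAt ℝ 4 (fun w => L w ^ 2 / 2) z :=
    fun z hz => ((hL.2.2.1 z hz).pow 2).div_const 2
  have hEcomp : (fun w => L w ^ 2 / 2) ∘ ⇑Φ' = fun w => L w ^ 2 / 2 := by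
    funext u
    show L (Φ u) ^ 2 / 2 = L u ^ 2 / 2
    rw [hiso]
  have hfd : ∀ z : Fin n → ℝ, z ≠ 0 →
      fderiv ℝ (fun w => L w ^ 2 / 2) z
        = (fderiv ℝ (fun w => L w ^ 2 / 2) (Φ z)).comp Φ' := by
    intro z hz
    have hdiffE : DifferentiableAt ℝ (fun w => L w ^ 2 / 2) (Φ' z) :=
      (hE4 _ (hker z hz)).differentiableAt (by norm_num)
    have h := fderiv_comp (𝕜 := ℝ) z hdiffE Φ'.differentiableAt
    rw [Φ'.fderiv] at h
    calc fderiv ℝ (fun w => L w ^ 2 / 2) z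
        = fderiv ℝ ((fun w => L w ^ 2 / 2) ∘ ⇑Φ') z := by rw [hEcomp]
      _ = (fderiv ℝ (fun w => L w ^ 2 / 2) (Φ z)).comp Φ' := h
  have hev : (fun y => fderiv ℝ (fun w => L w ^ 2 / 2) y a)
      =ᶠ[nhds x] fun y => fderiv ℝ (fun w => L w ^ 2 / 2) (Φ y) (Φ a) := by
    filter_upwards [IsOpen.mem_nhds isOpen_compl_singleton hx] with y hy
    rw [hfd y (Set.mem_compl_singleton_iff.mp hy)]
    rfl
  rw [hev.fderiv_eq]
  have houter : DifferentiableAt ℝ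
      (fun z => fderiv ℝ (fun w => L w ^ 2 / 2) z (Φ a)) (Φ' x) :=
    (diffD1 n L hL hΦx).clm_apply (differentiableAt_const _)
  have hcomp := fderiv_comp (𝕜 := ℝ) x houter Φ'.differentiableAt
  rw [Φ'.fderiv] at hcomp
  have hfun : (fun y => fderiv ℝ (fun w => L w ^ 2 / 2) (Φ y) (Φ a))
      = (fun z => fderiv ℝ (fun w => L w ^ 2 / 2) z (Φ a)) ∘ ⇑Φ' := rfl
  rw [hfun, hcomp]
  rfl

private lemma aux_ker (n : ℕ) (L : (Fin n → ℝ) → ℝ) (hL : IsFinslerMinkowski n L)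
    (Φ : (Fin n → ℝ) →ₗ[ℝ] (Fin n → ℝ))
    (hiso : ∀ v : Fin n → ℝ, L (Φ v) = L v) :
    ∀ u : Fin n → ℝ, u ≠ 0 → Φ u ≠ 0 := by
  intro u hu hΦu
  have h1 : L 0 = L u := by
    have h := hiso u
    rw [hΦu] at h
    exact h
  have h2 : L 0 = 2 * L u := by
    have h := hiso ((2 : ℝ) • u)
    rw [_root_.map_smul, hΦu, smul_zero, hL.1 u hu 2 (by norm_num)] at h
    exact h
  have h3 := hL.2.1 u hu
  linarith

/-- the averaged inner product `γ₁` is invariant under any linear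
isometry `Φ` of the Minkowski space: `γ₁(Φv, Φw) = γ₁(v,w)`. -/
theorem gammaOne_invariant_under_linear_isometry
    (n : ℕ) (L : (Fin n → ℝ) → ℝ) (hL : IsFinslerMinkowski n L)
    (Φ : (Fin n → ℝ) →ₗ[ℝ] (Fin n → ℝ))
    (hiso : ∀ v : Fin n → ℝ, L (Φ v) = L v)
    (v w : Fin n → ℝ) :
    gammaOne n L (Φ v) (Φ w) = gammaOne n L v w := by
  classical
  rcases Nat.eq_zero_or_pos n with hn | hn
  · subst hn
    simp [gammaOne]
  have hker := aux_ker n L hL Φ hiso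
  simp only [gammaOne]
  set K : Set (Fin n → ℝ) := {u : Fin n → ℝ | L u ≤ 1} with hKdef
  -- measurability
  have hLmeas : Measurable L :=
    measurable_of_continuousOn_compl_singleton 0
      (fun z hz => ((hL.2.2.1 z (Set.mem_compl_singleton_iff.mp hz)).continuousAt.continuousWithinAt))
  have hK : MeasurableSet K := hLmeas measurableSet_Iic
  have hpre : ⇑Φ ⁻¹' K = K := by
    ext u
    simp [hKdef, hiso u]
  -- determinant
  have hc : LinearMap.det Φ ≠ 0 := by
    intro h
    obtain ⟨a, haK, ha0⟩ :=
      Submodule.exists_mem_ne_zero_of_ne_bot (LinearMap.bot_lt_ker_of_det_eq_zero h).ne'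
    exact hker a ha0 (LinearMap.mem_ker.mp haK)
  set c : ℝ := LinearMap.det Φ with hcdef
  have habs : |c| ≠ 0 := abs_ne_zero.mpr hc
  -- matrix of Φ
  set A : Matrix (Fin n) (Fin n) ℝ := LinearMap.toMatrix' Φ with hAdef
  have hdetA : A.det = c := LinearMap.det_toMatrix' Φ
  have hAapp : ∀ (i k : Fin n), A k i = Φ (Pi.single i 1) k := by
    intro i k
    have hsingle : (fun j' => if j' = i then (1 : ℝ) else 0) = Pi.single i 1 := by
      ext j'
      simp [Pi.single_apply]
    rw [hAdef, LinearMap.toMatrix'_apply]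
  -- transformation of the metric matrix
  have hmat : ∀ x : Fin n → ℝ, x ≠ 0 →
      Matrix.of (fun i j => gmet n L x i j)
        = A.transpose * Matrix.of (fun i j => gmet n L (Φ x) i j) * A := by
    intro x hx
    ext i j
    have hstep : gmet n L x i j
        = ∑ k, ∑ l, (Φ (Pi.single i 1)) k * (Φ (Pi.single j 1)) l * gmet n L (Φ x) k l := by
      rw [show gmet n L x i j
          = fderiv ℝ (fun y => fderiv ℝ (fun w => L w ^ 2 / 2) y (Pi.single i 1)) x
              (Pi.single j 1) from rfl,
        aux_chain n L hL Φ hiso hker hx (Pi.single i 1) (Pi.single j 1),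
        ← aux_key n L hL (hker x hx) (Φ (Pi.single i 1)) (Φ (Pi.single j 1))]
    have hterm : ∀ k l : Fin n,
        (Φ (Pi.single i 1)) k * (Φ (Pi.single j 1)) l * gmet n L (Φ x) k l
          = A k i * gmet n L (Φ x) k l * A l j := by
      intro k l
      rw [hAapp i k, hAapp j l]
      ring
    simp only [Matrix.mul_apply, Matrix.transpose_apply, Matrix.of_apply, Finset.sum_mul]
    rw [hstep]
    conv_lhs => rw [Finset.sum_comm]
    exact Finset.sum_congr rfl fun l _ => Finset.sum_congr rfl fun k _ => hterm k l
  -- transformation of the volume density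
  have hdens : ∀ x : Fin n → ℝ, x ≠ 0 →
      volDens n L x = |c| * volDens n L (Φ x) := by
    intro x hx
    simp only [volDens]
    rw [hmat x hx, Matrix.det_mul, Matrix.det_mul, Matrix.det_transpose, hdetA,
      show c * (Matrix.of fun i j => gmet n L (Φ x) i j).det * c
        = c ^ 2 * (Matrix.of fun i j => gmet n L (Φ x) i j).det from by ring,
      Real.sqrt_mul (sq_nonneg c), Real.sqrt_sq_eq_abs]
  set F : (Fin n → ℝ) → ℝ :=
    fun u => (∑ i, ∑ j, (Φ v) i * (Φ w) j * gmet n L u i j) * volDens n L u with hFdef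
  set Gf : (Fin n → ℝ) → ℝ :=
    fun u => (∑ i, ∑ j, v i * w j * gmet n L u i j) * volDens n L u with hGdef
  -- pointwise identity
  have hpoint : ∀ x : Fin n → ℝ, x ≠ 0 → F (Φ x) = |c|⁻¹ * Gf x := by
    intro x hx
    have h1 : ∑ i, ∑ j, (Φ v) i * (Φ w) j * gmet n L (Φ x) i j
        = ∑ i, ∑ j, v i * w j * gmet n L x i j := by
      rw [aux_key n L hL (hker x hx) (Φ v) (Φ w), aux_key n L hL hx v w]
      exact (aux_chain n L hL Φ hiso hker hx v w).symm
    show (∑ i, ∑ j, (Φ v) i * (Φ w) j * gmet n L (Φ x) i j) * volDens n L (Φ x)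
        = |c|⁻¹ * ((∑ i, ∑ j, v i * w j * gmet n L x i j) * volDens n L x)
    rw [h1, hdens x hx]
    field_simp
  -- measurability of the integrand
  have hgmeas : ∀ i j : Fin n, Measurable fun u => gmet n L u i j := by
    intro i j
    exact measurable_fderiv_apply_const ℝ _ (Pi.single j 1)
  have hdetmeas : Measurable fun u => (Matrix.of fun i j => gmet n L u i j).det := by
    simp only [Matrix.det_apply', Matrix.of_apply]
    refine Finset.measurable_sum _ fun σ _ => ?_
    exact (Finset.measurable_prod _ fun k _ => hgmeas _ _).const_mul _
  have hvmeas : Measurable (volDens n L) :=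
    Real.continuous_sqrt.measurable.comp hdetmeas
  have hFmeas : Measurable F := by
    refine Measurable.mul ?_ hvmeas
    exact Finset.measurable_sum _ fun i _ => Finset.measurable_sum _ fun j _ =>
      (hgmeas i j).const_mul _
  -- change of variables
  have hΦmeas : Measurable (⇑Φ) := (LinearMap.toContinuousLinearMap Φ).continuous.measurable
  have hmap := Real.map_linearMap_volume_pi_eq_smul_volume_pi (f := Φ) hc
  have hvol : (volume : Measure (Fin n → ℝ))
      = (ENNReal.ofReal |c|) • Measure.map (⇑Φ) volume := by
    rw [hmap, smul_smul, ← ENNReal.ofReal_mul (abs_nonneg c), abs_inv,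
      mul_inv_cancel₀ habs, ENNReal.ofReal_one, one_smul]
  have hind : ∀ x : Fin n → ℝ, K.indicator F (Φ x) = K.indicator (fun y => F (Φ y)) x := by
    intro x
    rw [← Set.indicator_comp_right (⇑Φ) (s := K) (g := F), hpre]
    rfl
  have hInt1 : ∫ u in K, F u = |c| * ∫ x in K, F (Φ x) := by
    rw [← integral_indicator hK]
    conv_lhs => rw [hvol]
    rw [integral_smul_measure,
      integral_map hΦmeas.aemeasurable (hFmeas.indicator hK).aestronglyMeasurable,
      ENNReal.toReal_ofReal (abs_nonneg c)]
    simp only [hind]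
    rw [integral_indicator hK, smul_eq_mul]
  -- a.e. pointwise identity on K
  have h0 : (volume : Measure (Fin n → ℝ)) {0} = 0 := by
    haveI : Nonempty (Fin n) := ⟨⟨0, hn⟩⟩
    haveI : Nontrivial (Fin n → ℝ) := inferInstance
    exact measure_singleton 0
  have h0' : ∀ᵐ x : Fin n → ℝ, x ≠ 0 := by
    rw [ae_iff]
    convert h0 using 2
    ext x
    simp
  have hInt2 : ∫ x in K, F (Φ x) = ∫ x in K, |c|⁻¹ * Gf x := by
    refine setIntegral_congr_ae hK ?_
    filter_upwards [h0'] with x hx _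
    exact hpoint x hx
  rw [show (∫ u in K,
        (∑ i, ∑ j, (Φ v) i * (Φ w) j * gmet n L u i j) * volDens n L u) = ∫ u in K, F u from rfl,
    show (∫ u in K,
        (∑ i, ∑ j, v i * w j * gmet n L u i j) * volDens n L u) = ∫ u in K, Gf u from rfl,
    hInt1, hInt2, integral_const_mul]
  field_simp
end

section
/- Let L be a Finsler–Minkowski functional on ℝⁿ inducing the Funk metric F on U = int K via L(p + v/F(v_p)) = 1. Then F satisfies Okada's equations: F·∂F/∂yⁱ = ∂F/∂xⁱ for all i, where (x, y) are the canonical coordinates on TU = U × ℝⁿ. -/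
open MeasureTheory

variable {n : ℕ}

lemma clm_apply_eq_sum (f : (Fin n → ℝ) →L[ℝ] ℝ) (v : Fin n → ℝ) :
    f v = ∑ i, v i * f (Pi.single i 1) := by
  conv_lhs => rw [pi_eq_sum_univ v, map_sum]
  refine Finset.sum_congr rfl fun i _ => ?_
  rw [_root_.map_smul, smul_eq_mul]
  congr 2
  funext j
  simp [Pi.single_apply, eq_comm]

lemma euler_hom {L : (Fin n → ℝ) → ℝ}
    (hhom : ∀ v : Fin n → ℝ, v ≠ 0 → ∀ t : ℝ, 0 < t → L (t • v) = t * L v)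
    {q : Fin n → ℝ} (hq : q ≠ 0) (hd : DifferentiableAt ℝ L q) :
    fderiv ℝ L q q = L q := by
  have hsm : HasDerivAt (fun t : ℝ => t • q) q 1 := by
    simpa using (hasDerivAt_id (1:ℝ)).smul_const q
  have h1 : HasDerivAt (fun t : ℝ => L (t • q)) (fderiv ℝ L q q) 1 := by
    have hd' : HasFDerivAt L (fderiv ℝ L q) ((1:ℝ) • q) := by
      rw [one_smul]; exact hd.hasFDerivAt
    have := hd'.comp_hasDerivAt 1 hsm
    exact this
  have h2 : HasDerivAt (fun t : ℝ => L (t • q)) (L q) 1 := by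
    have heq : (fun t : ℝ => t * L q) =ᶠ[nhds 1] fun t : ℝ => L (t • q) := by
      filter_upwards [eventually_gt_nhds (show (0:ℝ) < 1 by norm_num)] with t ht
      exact (hhom q hq t ht).symm
    exact (hasDerivAt_mul_const (L q)).congr_of_eventuallyEq heq.symm
  exact h1.unique h2

lemma hE_contDiffAt {L : (Fin n → ℝ) → ℝ} {u : Fin n → ℝ} (hC : ContDiffAt ℝ 4 L u) :
    ContDiffAt ℝ 4 (fun w => L w ^ 2 / 2) u := (hC.pow 2).div_const 2

lemma hasFDerivAt_fderiv_E {L : (Fin n → ℝ) → ℝ} {u : Fin n → ℝ} (hC : ContDiffAt ℝ 4 L u) :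
    HasFDerivAt (fderiv ℝ (fun w => L w ^ 2 / 2))
      (fderiv ℝ (fderiv ℝ (fun w => L w ^ 2 / 2)) u) u := by
  have h := (hE_contDiffAt hC).fderiv_right (m := 1) (by norm_num)
  exact (h.differentiableAt one_ne_zero).hasFDerivAt

lemma fderiv_E_eq {L : (Fin n → ℝ) → ℝ} {q : Fin n → ℝ} (hd : DifferentiableAt ℝ L q) :
    fderiv ℝ (fun w => L w ^ 2 / 2) q = L q • fderiv ℝ L q := by
  have h1 : HasFDerivAt (fun w => L w ^ 2 / 2) (L q • fderiv ℝ L q) q := by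
    have := (hd.hasFDerivAt.mul hd.hasFDerivAt).const_smul (2⁻¹ : ℝ)
    have heq : (fun w => (2⁻¹ : ℝ) • (L w * L w)) = fun w => L w ^ 2 / 2 := by
      funext w; simp [smul_eq_mul]; ring
    rw [show (2⁻¹ : ℝ) • (L * L) = fun w => L w ^ 2 / 2 from heq] at this
    refine this.congr_fderiv ?_
    ext z
    simp [smul_eq_mul]
    ring
  exact h1.fderiv

lemma hasFDerivAt_fderiv_E_apply {L : (Fin n → ℝ) → ℝ} {u : Fin n → ℝ}
    (hC : ContDiffAt ℝ 4 L u) (w : Fin n → ℝ) :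
    HasFDerivAt (fun z => fderiv ℝ (fun w => L w ^ 2 / 2) z w)
      ((fderiv ℝ (fderiv ℝ (fun w => L w ^ 2 / 2)) u).flip w) u := by
  have h := (hasFDerivAt_fderiv_E hC).clm_apply (hasFDerivAt_const w u)
  simpa using h

lemma D2_pos {L : (Fin n → ℝ) → ℝ} (hL : IsFinslerMinkowski n L) {u : Fin n → ℝ} (hu : u ≠ 0)
    {w : Fin n → ℝ} (hw : w ≠ 0) :
    0 < fderiv ℝ (fderiv ℝ (fun z => L z ^ 2 / 2)) u w w := by
  have hC := hL.2.2.1 u hu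
  set D2 := fderiv ℝ (fderiv ℝ (fun z => L z ^ 2 / 2)) u with hD2
  have hgmet : ∀ i j, gmet n L u i j = D2 (Pi.single j 1) (Pi.single i 1) := by
    intro i j
    have := (hasFDerivAt_fderiv_E_apply hC (Pi.single i 1)).fderiv
    rw [gmet, this]
    simp
    rfl
  have hsum := hL.2.2.2 u hu w hw
  have : D2 w w = ∑ i, ∑ j, w i * w j * gmet n L u i j := by
    rw [clm_apply_eq_sum (D2 w)]
    refine Finset.sum_congr rfl fun i _ => ?_
    have : D2 w (Pi.single i 1) = (D2.flip (Pi.single i 1)) w := rfl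
    rw [this, clm_apply_eq_sum (D2.flip (Pi.single i 1)), Finset.mul_sum]
    refine Finset.sum_congr rfl fun j _ => ?_
    rw [hgmet i j]
    simp [ContinuousLinearMap.flip_apply]
    ring
  rw [this]; exact hsum

lemma key_A_ne_zero {L : (Fin n → ℝ) → ℝ} (hL : IsFinslerMinkowski n L)
    {p v : Fin n → ℝ} (hv : v ≠ 0) {b : ℝ} (hb : 0 < b)
    (hseg : ∀ s : ℝ, 0 ≤ s → s ≤ b → p + s • v ≠ 0)
    (hLq : L (p + b • v) = 1) (hLp : L p ≤ 1) :
    fderiv ℝ L (p + b • v) v ≠ 0 := by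
  intro hA
  set E := fun z : Fin n → ℝ => L z ^ 2 / 2 with hE
  set γ := fun s : ℝ => p + s • v with hγ
  set h1 := fun s : ℝ => fderiv ℝ E (γ s) v with hh1
  have hγd : ∀ s : ℝ, HasDerivAt γ v s := by
    intro s
    have : HasDerivAt (fun s : ℝ => s • v) ((1:ℝ) • v) s := (hasDerivAt_id s).smul_const v
    simpa [hγ] using this.const_add p
  have hmem : ∀ s ∈ Set.Icc (0:ℝ) b, γ s ≠ 0 := fun s hs => hseg s hs.1 hs.2
  have hCs : ∀ s ∈ Set.Icc (0:ℝ) b, ContDiffAt ℝ 4 L (γ s) := fun s hs => hL.2.2.1 _ (hmem s hs)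
  have hd_h : ∀ s ∈ Set.Icc (0:ℝ) b, HasDerivAt (fun t => E (γ t)) (h1 s) s := by
    intro s hs
    have hEd : HasFDerivAt E (fderiv ℝ E (γ s)) (γ s) :=
      ((hE_contDiffAt (hCs s hs)).differentiableAt (by norm_num)).hasFDerivAt
    exact hEd.comp_hasDerivAt s (hγd s)
  have hd_h1 : ∀ s ∈ Set.Icc (0:ℝ) b,
      HasDerivAt h1 (fderiv ℝ (fderiv ℝ E) (γ s) v v) s := by
    intro s hs
    have := (hasFDerivAt_fderiv_E_apply (hCs s hs) v).comp_hasDerivAt s (hγd s)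
    exact this
  have hpos : ∀ s ∈ Set.Icc (0:ℝ) b, 0 < fderiv ℝ (fderiv ℝ E) (γ s) v v :=
    fun s hs => D2_pos hL (hmem s hs) hv
  have hq0 : h1 b = 0 := by
    have heq : fderiv ℝ E (γ b) = L (γ b) • fderiv ℝ L (γ b) :=
      fderiv_E_eq ((hCs b ⟨le_of_lt hb, le_rfl⟩).differentiableAt (by norm_num))
    have hγb : γ b = p + b • v := rfl
    rw [hγb] at heq
    rw [hh1]
    simp only [heq, hγb, ContinuousLinearMap.coe_smul', Pi.smul_apply, smul_eq_mul, hA, mul_zero]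
  have hmono : StrictMonoOn h1 (Set.Icc 0 b) :=
    strictMonoOn_of_deriv_pos (convex_Icc 0 b)
      (fun s hs => (hd_h1 s hs).continuousAt.continuousWithinAt)
      (by
        intro s hs
        rw [interior_Icc] at hs
        rw [(hd_h1 s (Set.mem_Icc_of_Ioo hs)).deriv]
        exact hpos s (Set.mem_Icc_of_Ioo hs))
  have hneg : ∀ s ∈ Set.Ico (0:ℝ) b, h1 s < 0 := by
    intro s hs
    have := hmono (Set.mem_Icc_of_Ico hs) (Set.right_mem_Icc.2 (le_of_lt hb)) hs.2
    rwa [hq0] at this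
  have hanti : StrictAntiOn (fun t => E (γ t)) (Set.Icc 0 b) :=
    strictAntiOn_of_deriv_neg (convex_Icc 0 b)
      (fun s hs => (hd_h s hs).continuousAt.continuousWithinAt)
      (by
        intro s hs
        rw [interior_Icc] at hs
        rw [(hd_h s (Set.mem_Icc_of_Ioo hs)).deriv]
        exact hneg s ⟨le_of_lt hs.1, hs.2⟩)
  have hfinal := hanti (Set.left_mem_Icc.2 (le_of_lt hb)) (Set.right_mem_Icc.2 (le_of_lt hb)) hb
  have hγ0 : γ 0 = p := by simp [hγ]
  have hγb : γ b = p + b • v := rfl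
  have hLppos : 0 < L p := hL.2.1 p (by simpa using hseg 0 le_rfl (le_of_lt hb))
  simp only [hγ0, hγb, hE, hLq] at hfinal
  nlinarith [hfinal, hLp, hLppos]

set_option maxHeartbeats 1000000

/-- Okada's equations for Funk metrics: if `F(v_p) = L_p(v)` is
the Funk metric of the convex body `K = {L ≤ 1}` on `U = int K`, defined by
`L(p + v/F(v_p)) = 1`, then `F · ∂F/∂yⁱ = ∂F/∂xⁱ` for all `i`. -/
theorem okada_equations_for_funk_metric
    (n : ℕ) (L : (Fin n → ℝ) → ℝ) (hL : IsFinslerMinkowski n L)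
    (F : (Fin n → ℝ) × (Fin n → ℝ) → ℝ)
    (hFpos : ∀ p ∈ interior {u : Fin n → ℝ | L u ≤ 1}, ∀ v : Fin n → ℝ, v ≠ 0 →
      0 < F (p, v))
    (hFdef : ∀ p ∈ interior {u : Fin n → ℝ | L u ≤ 1}, ∀ v : Fin n → ℝ, v ≠ 0 →
      L (p + (F (p, v))⁻¹ • v) = 1)
    (hFsmooth : ∀ p ∈ interior {u : Fin n → ℝ | L u ≤ 1}, ∀ v : Fin n → ℝ, v ≠ 0 →
      ContDiffAt ℝ 1 F (p, v))
    (p : Fin n → ℝ) (hp : p ∈ interior {u : Fin n → ℝ | L u ≤ 1})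
    (v : Fin n → ℝ) (hv : v ≠ 0) :
    ∀ i : Fin n,
      F (p, v) * fderiv ℝ (fun y => F (p, y)) v (Pi.single i 1) =
        fderiv ℝ (fun x => F (x, v)) p (Pi.single i 1) := by
  intro i
  have hapos : 0 < F (p, v) := hFpos p hp v hv
  set a := F (p, v) with ha
  have hane : a ≠ 0 := ne_of_gt hapos
  have hFd : DifferentiableAt ℝ F (p, v) := (hFsmooth p hp v hv).differentiableAt one_ne_zero
  set DF := fderiv ℝ F (p, v) with hDF
  by_cases hq : p + a⁻¹ • v = 0
  · -- degenerate case : the indicatrix point is the origin, and then F is locally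
    -- the explicit function z ↦ -(z.2 j / z.1 j).
    obtain ⟨j, hj⟩ : ∃ j, v j ≠ 0 := Function.ne_iff.1 hv
    have hqj : p j + a⁻¹ * v j = 0 := by
      have := congrFun hq j; simpa using this
    have hpj : p j ≠ 0 := by
      intro h0
      rw [h0, zero_add] at hqj
      exact hj (by
        have := mul_eq_zero.1 hqj
        rcases this with h | h
        · exact absurd h (inv_ne_zero hane)
        · exact h)
    have hvj : v j = -a * p j := by
      field_simp at hqj ⊢
      linarith
    -- a positive lower bound for the norm of nonzero vectors on the indicatrix
    have hnv : ‖v‖ ≠ 0 := norm_ne_zero_iff.2 hv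
    have hu0 : ‖v‖⁻¹ • v ∈ Metric.sphere (0 : Fin n → ℝ) 1 := by
      simp [norm_smul, abs_of_nonneg (inv_nonneg.2 (norm_nonneg v)),
        inv_mul_cancel₀ hnv]
    have hSne : ∀ u ∈ Metric.sphere (0 : Fin n → ℝ) 1, u ≠ 0 := by
      intro u hu h0
      rw [h0] at hu
      simp at hu
    obtain ⟨um, humS, hum'⟩ := (isCompact_sphere (0 : Fin n → ℝ) 1).exists_isMaxOn
      ⟨_, hu0⟩ (fun u hu => ((hL.2.2.1 u (hSne u hu)).continuousAt).continuousWithinAt)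
    have hum : ∀ u ∈ Metric.sphere (0 : Fin n → ℝ) 1, L u ≤ L um := fun u hu => hum' hu
    set M := L um with hM
    have hMpos : 0 < M := hL.2.1 um (hSne um humS)
    have hlow : ∀ z : Fin n → ℝ, z ≠ 0 → L z = 1 → M⁻¹ ≤ ‖z‖ := by
      intro z hz h1
      have hnz : ‖z‖ ≠ 0 := norm_ne_zero_iff.2 hz
      have hnzpos : 0 < ‖z‖ := norm_pos_iff.2 hz
      have hhom := hL.1 (‖z‖⁻¹ • z) (smul_ne_zero (inv_ne_zero hnz) hz) ‖z‖ hnzpos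
      rw [smul_smul, mul_inv_cancel₀ hnz, one_smul] at hhom
      have hmem : ‖z‖⁻¹ • z ∈ Metric.sphere (0 : Fin n → ℝ) 1 := by
        simp [norm_smul, abs_of_nonneg (inv_nonneg.2 (norm_nonneg z)),
          inv_mul_cancel₀ hnz]
      have hle : L (‖z‖⁻¹ • z) ≤ M := hum _ hmem
      have : 1 ≤ ‖z‖ * M := by
        rw [h1] at hhom
        nlinarith [hL.2.1 (‖z‖⁻¹ • z) (hSne _ hmem)]
      rw [inv_le_iff_one_le_mul₀ hMpos]
      linarith [this, mul_comm ‖z‖ M]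
    -- G z = 0 eventually
    have hFc : ContinuousAt F (p, v) := (hFsmooth p hp v hv).continuousAt
    have hGcont : ContinuousAt (fun z : (Fin n → ℝ) × (Fin n → ℝ) => z.1 + (F z)⁻¹ • z.2)
        (p, v) :=
      continuousAt_fst.add ((hFc.inv₀ hane).smul continuousAt_snd)
    have hGnorm : Filter.Tendsto
        (fun z : (Fin n → ℝ) × (Fin n → ℝ) => ‖z.1 + (F z)⁻¹ • z.2‖)
        (nhds (p, v)) (nhds 0) := by
      simpa [ContinuousAt, ← ha, hq] using hGcont.norm
    have hsmall : ∀ᶠ z : (Fin n → ℝ) × (Fin n → ℝ) in nhds (p, v),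
        ‖z.1 + (F z)⁻¹ • z.2‖ < M⁻¹ :=
      hGnorm.eventually (eventually_lt_nhds (inv_pos.2 hMpos))
    have hdom1 : ∀ᶠ z : (Fin n → ℝ) × (Fin n → ℝ) in nhds (p, v),
        z.1 ∈ interior {u : Fin n → ℝ | L u ≤ 1} ∧ z.2 ≠ 0 := by
      have hWopen : IsOpen ((interior {u : Fin n → ℝ | L u ≤ 1}) ×ˢ ({(0 : Fin n → ℝ)}ᶜ)) :=
        isOpen_interior.prod isOpen_compl_singleton
      filter_upwards [hWopen.mem_nhds ⟨hp, hv⟩] with z hz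
      exact ⟨hz.1, hz.2⟩
    have hdom2 : ∀ᶠ z : (Fin n → ℝ) × (Fin n → ℝ) in nhds (p, v), z.1 j ≠ 0 := by
      have : ContinuousAt (fun z : (Fin n → ℝ) × (Fin n → ℝ) => z.1 j) (p, v) :=
        (continuous_apply j).continuousAt.comp continuousAt_fst
      exact this.eventually_ne hpj
    have hdom3 : ∀ᶠ z : (Fin n → ℝ) × (Fin n → ℝ) in nhds (p, v), F z ≠ 0 :=
      hFc.eventually_ne hane
    have hFeq : F =ᶠ[nhds (p, v)] fun z => -(z.2 j / z.1 j) := by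
      filter_upwards [hsmall, hdom1, hdom2, hdom3] with z h1 h2 h3 h4
      have hGz : z.1 + (F z)⁻¹ • z.2 = 0 := by
        by_contra hne
        have := hlow _ hne (hFdef z.1 h2.1 z.2 h2.2)
        linarith
      have hcoord : z.1 j + (F z)⁻¹ * z.2 j = 0 := by
        have := congrFun hGz j; simpa using this
      field_simp at hcoord
      field_simp
      linarith
    -- the two partial derivatives
    have hyev : (fun y => F (p, y)) =ᶠ[nhds v] fun y : Fin n → ℝ => -(y j / p j) := by
      have hts : Filter.Tendsto (fun y : Fin n → ℝ => (p, y)) (nhds v) (nhds (p, v)) :=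
        (Continuous.prodMk_right p).tendsto v
      have := hFeq.comp_tendsto hts
      exact this
    have hxev : (fun x => F (x, v)) =ᶠ[nhds p] fun x : Fin n → ℝ => -(v j / x j) := by
      have hts : Filter.Tendsto (fun x : Fin n → ℝ => (x, v)) (nhds p) (nhds (p, v)) :=
        ((continuous_id.prodMk continuous_const)).tendsto p
      have := hFeq.comp_tendsto hts
      exact this
    have hy1 : HasFDerivAt (fun y : Fin n → ℝ => -(y j / p j))
        ((-(p j)⁻¹) • (ContinuousLinearMap.proj j :
          ((Fin n → ℝ)) →L[ℝ] ℝ)) v := by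
      have hb : HasFDerivAt (fun y : Fin n → ℝ => y j)
          (ContinuousLinearMap.proj j : ((Fin n → ℝ)) →L[ℝ] ℝ) v :=
        (ContinuousLinearMap.proj (R := ℝ) (φ := fun _ : Fin n => ℝ) j).hasFDerivAt
      have := hb.const_mul (-(p j)⁻¹)
      have hfun : (fun y : Fin n → ℝ => (-(p j)⁻¹) * y j) = fun y : Fin n → ℝ => -(y j / p j) := by
        funext y; field_simp
      rwa [hfun] at this
    have hx1 : HasFDerivAt (fun x : Fin n → ℝ => -(v j / x j))
        ((-(v j)) • ((-(p j ^ 2)⁻¹) • (ContinuousLinearMap.proj j :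
          ((Fin n → ℝ)) →L[ℝ] ℝ))) p := by
      have hb : HasFDerivAt (fun x : Fin n → ℝ => x j)
          (ContinuousLinearMap.proj j : ((Fin n → ℝ)) →L[ℝ] ℝ) p :=
        (ContinuousLinearMap.proj (R := ℝ) (φ := fun _ : Fin n => ℝ) j).hasFDerivAt
      have hinv : HasFDerivAt (fun x : Fin n → ℝ => (x j)⁻¹)
          ((-(p j ^ 2)⁻¹) • (ContinuousLinearMap.proj j :
            ((Fin n → ℝ)) →L[ℝ] ℝ)) p := by
        exact (hasDerivAt_inv hpj).comp_hasFDerivAt p hb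
      have := hinv.const_mul (-(v j))
      have hfun : (fun x : Fin n → ℝ => (-(v j)) * (x j)⁻¹) = fun x : Fin n → ℝ => -(v j / x j) := by
        funext x; field_simp
      rwa [hfun] at this
    rw [hyev.fderiv_eq, hxev.fderiv_eq, hy1.fderiv, hx1.fderiv]
    simp only [ContinuousLinearMap.coe_smul', Pi.smul_apply, ContinuousLinearMap.proj_apply,
      smul_eq_mul]
    rcases eq_or_ne j i with rfl | hij
    · rw [Pi.single_eq_same]
      rw [hvj]
      field_simp
    · rw [Pi.single_eq_of_ne hij]
      ring
  · -- main case : the indicatrix point q = p + a⁻¹ • v is nonzero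
    have hLq : L (p + a⁻¹ • v) = 1 := hFdef p hp v hv
    have hLdiff : DifferentiableAt ℝ L (p + a⁻¹ • v) :=
      (hL.2.2.1 _ hq).differentiableAt (by norm_num)
    set DL := fderiv ℝ L (p + a⁻¹ • v) with hDL
    -- derivative of the map G z = z.1 + (F z)⁻¹ • z.2
    have hFinv : HasFDerivAt (fun z : (Fin n → ℝ) × (Fin n → ℝ) => (F z)⁻¹)
        ((-(a ^ 2)⁻¹) • DF) (p, v) :=
      (hasDerivAt_inv hane).comp_hasFDerivAt (p, v) hFd.hasFDerivAt
    have hsnd : HasFDerivAt (fun z : (Fin n → ℝ) × (Fin n → ℝ) => z.2)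
        (ContinuousLinearMap.snd ℝ (Fin n → ℝ) (Fin n → ℝ)) (p, v) := hasFDerivAt_snd
    have hfst : HasFDerivAt (fun z : (Fin n → ℝ) × (Fin n → ℝ) => z.1)
        (ContinuousLinearMap.fst ℝ (Fin n → ℝ) (Fin n → ℝ)) (p, v) := hasFDerivAt_fst
    have hG : HasFDerivAt (fun z : (Fin n → ℝ) × (Fin n → ℝ) => z.1 + (F z)⁻¹ • z.2)
        (ContinuousLinearMap.fst ℝ (Fin n → ℝ) (Fin n → ℝ) +
          (a⁻¹ • ContinuousLinearMap.snd ℝ (Fin n → ℝ) (Fin n → ℝ) +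
            ((-(a ^ 2)⁻¹) • DF).smulRight v)) (p, v) :=
      hfst.add (hFinv.smul hsnd)
    have hLG : HasFDerivAt
        (L ∘ fun z : (Fin n → ℝ) × (Fin n → ℝ) => z.1 + (F z)⁻¹ • z.2)
        (DL.comp (ContinuousLinearMap.fst ℝ (Fin n → ℝ) (Fin n → ℝ) +
          (a⁻¹ • ContinuousLinearMap.snd ℝ (Fin n → ℝ) (Fin n → ℝ) +
            ((-(a ^ 2)⁻¹) • DF).smulRight v))) (p, v) :=
      hLdiff.hasFDerivAt.comp (p, v) hG
    have hconst : (L ∘ fun z : (Fin n → ℝ) × (Fin n → ℝ) => z.1 + (F z)⁻¹ • z.2)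
        =ᶠ[nhds (p, v)] fun _ => (1 : ℝ) := by
      have hWopen : IsOpen ((interior {u : Fin n → ℝ | L u ≤ 1}) ×ˢ ({(0 : Fin n → ℝ)}ᶜ)) :=
        isOpen_interior.prod isOpen_compl_singleton
      filter_upwards [hWopen.mem_nhds ⟨hp, hv⟩] with z hz
      exact hFdef z.1 hz.1 z.2 hz.2
    have hzero : DL.comp (ContinuousLinearMap.fst ℝ (Fin n → ℝ) (Fin n → ℝ) +
        (a⁻¹ • ContinuousLinearMap.snd ℝ (Fin n → ℝ) (Fin n → ℝ) +
          ((-(a ^ 2)⁻¹) • DF).smulRight v)) = 0 := by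
      have h2 := hconst.fderiv_eq (𝕜 := ℝ)
      rw [fderiv_const_apply] at h2
      rw [hLG.fderiv] at h2
      simpa using h2
    have heval : ∀ w : (Fin n → ℝ) × (Fin n → ℝ),
        DL w.1 + (a⁻¹ * DL w.2 + (-(a ^ 2)⁻¹ * DF w) * DL v) = 0 := by
      intro w
      have := DFunLike.congr_fun hzero w
      simpa [ContinuousLinearMap.smulRight_apply, smul_eq_mul, mul_comm] using this
    have heq1 : DL (Pi.single i 1) + (-(a ^ 2)⁻¹ * DF (Pi.single i 1, 0)) * DL v = 0 := by
      have := heval (Pi.single i 1, 0)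
      simpa using this
    have heq2 : a⁻¹ * DL (Pi.single i 1) + (-(a ^ 2)⁻¹ * DF (0, Pi.single i 1)) * DL v = 0 := by
      have := heval (0, Pi.single i 1)
      simpa using this
    -- DL v ≠ 0
    have hAne : DL v ≠ 0 := by
      by_cases hcol : ∃ s : ℝ, 0 ≤ s ∧ s < a⁻¹ ∧ p + s • v = 0
      · obtain ⟨s, hs0, hsa, hps⟩ := hcol
        have hr : (0 : ℝ) < a⁻¹ - s := by linarith
        have hqv : p + a⁻¹ • v = (a⁻¹ - s) • v := by
          rw [eq_neg_of_add_eq_zero_left hps, sub_smul]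
          abel
        have hveq : v = (a⁻¹ - s)⁻¹ • (p + a⁻¹ • v) := by
          rw [hqv, smul_smul, inv_mul_cancel₀ (ne_of_gt hr), one_smul]
        have hDLv : DL v = (a⁻¹ - s)⁻¹ * L (p + a⁻¹ • v) := by
          conv_lhs => rw [hveq]
          rw [_root_.map_smul, smul_eq_mul]
          congr 1
          exact euler_hom hL.1 hq hLdiff
        rw [hDLv, hLq, mul_one]
        exact inv_ne_zero (ne_of_gt hr)
      · push_neg at hcol
        have hseg : ∀ s : ℝ, 0 ≤ s → s ≤ a⁻¹ → p + s • v ≠ 0 := by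
          intro s hs0 hsle
          rcases lt_or_eq_of_le hsle with h | h
          · exact hcol s hs0 h
          · rw [h]; exact hq
        have hLp1 : L p ≤ 1 := by
          have h := interior_subset hp
          simpa using h
        exact key_A_ne_zero hL hv (inv_pos.2 hapos) hseg hLq hLp1
    -- finish by algebra
    have hxpart : fderiv ℝ (fun x => F (x, v)) p (Pi.single i 1) = DF (Pi.single i 1, 0) := by
      have hxmap : HasFDerivAt (fun x : Fin n → ℝ => (x, v))
          ((ContinuousLinearMap.id ℝ (Fin n → ℝ)).prod 0) p :=
        (hasFDerivAt_id p).prodMk (hasFDerivAt_const v p)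
      have hcomp : HasFDerivAt (fun x : Fin n → ℝ => F (x, v))
          (DF.comp ((ContinuousLinearMap.id ℝ (Fin n → ℝ)).prod 0)) p :=
        hFd.hasFDerivAt.comp p hxmap
      rw [hcomp.fderiv]
      simp
    have hypart : fderiv ℝ (fun y => F (p, y)) v (Pi.single i 1) = DF (0, Pi.single i 1) := by
      have hymap : HasFDerivAt (fun y : Fin n → ℝ => (p, y))
          (((0 : (Fin n → ℝ) →L[ℝ] (Fin n → ℝ))).prod (ContinuousLinearMap.id ℝ (Fin n → ℝ))) v :=
        (hasFDerivAt_const p v).prodMk (hasFDerivAt_id v)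
      have hcomp : HasFDerivAt (fun y : Fin n → ℝ => F (p, y))
          (DF.comp (((0 : (Fin n → ℝ) →L[ℝ] (Fin n → ℝ))).prod (ContinuousLinearMap.id ℝ (Fin n → ℝ)))) v :=
        hFd.hasFDerivAt.comp v hymap
      rw [hcomp.fderiv]
      simp
    rw [hxpart, hypart]
    have ha2 : (a : ℝ) ^ 2 ≠ 0 := pow_ne_zero 2 hane
    have hkey : (a * DF (0, Pi.single i 1) - DF (Pi.single i 1, 0)) * DL v = 0 := by
      have h1 : DL (Pi.single i 1) = (a ^ 2)⁻¹ * DF (Pi.single i 1, 0) * DL v := by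
        linarith [heq1]
      have h2 : a⁻¹ * DL (Pi.single i 1) = (a ^ 2)⁻¹ * DF (0, Pi.single i 1) * DL v := by
        linarith [heq2]
      rw [h1] at h2
      field_simp at h2
      have h3 : ((a * DF (0, Pi.single i 1) - DF (Pi.single i 1, 0)) * DL v) * a ^ 2 = 0 := by
        linear_combination (-(DL v) * a ^ 2) * h2
      rcases mul_eq_zero.1 h3 with h | h
      · exact h
      · exact absurd h ha2
    rcases mul_eq_zero.1 hkey with h | h
    · linarith [sub_eq_zero.1 h]
    · exact absurd h hAne
end

section
/- Let F be the Funk metric of a convex body K ⊂ ℝⁿ with Finsler–Minkowski functional L, and let ρ(v_p) = p + v/F(v_p) ∈ ∂K be the projection. Then along ρ one has ∂L/∂uⁱ ∘ ρ = (1 − xᵏ ∂L/∂uᵏ ∘ ρ) · ∂F/∂yⁱ, and the factor 1 − xᵏ ∂L/∂uᵏ ∘ ρ is strictly positive. -/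
open MeasureTheory

open Set Pointwise

section Aux

lemma clm_eq_sum {n : ℕ} (a : (Fin n → ℝ) →L[ℝ] ℝ) (x : Fin n → ℝ) :
    a x = ∑ i, x i * a (Pi.single i 1) := by
  conv_lhs => rw [pi_eq_sum_univ x]
  rw [map_sum]
  refine Finset.sum_congr rfl fun i _ => ?_
  rw [_root_.map_smul]
  simp only [smul_eq_mul]
  congr 2
  funext j
  simp [Pi.single_apply, eq_comm]

variable {n : ℕ} {L : (Fin n → ℝ) → ℝ}

lemma ldiff (hL : IsFinslerMinkowski n L) {u : Fin n → ℝ} (hu : u ≠ 0) :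
    DifferentiableAt ℝ L u :=
  (hL.2.2.1 u hu).differentiableAt (by norm_num)

lemma euler (hL : IsFinslerMinkowski n L) {u : Fin n → ℝ} (hu : u ≠ 0) :
    fderiv ℝ L u u = L u := by
  have hg : HasDerivAt (fun t : ℝ => t • u) u 1 := by
    simpa using (hasDerivAt_id (1:ℝ)).smul_const u
  have hf : HasFDerivAt L (fderiv ℝ L u) ((fun t : ℝ => t • u) 1) := by
    simpa using (ldiff hL hu).hasFDerivAt
  have h1 := hf.comp_hasDerivAt (1:ℝ) hg
  have h2 : HasDerivAt (fun t : ℝ => L (t • u)) (L u) 1 := by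
    have h3 : HasDerivAt (fun t : ℝ => t * L u) (L u) 1 := by
      simpa using (hasDerivAt_id (1:ℝ)).mul_const (L u)
    refine h3.congr_of_eventuallyEq ?_
    filter_upwards [eventually_gt_nhds (by norm_num : (0:ℝ) < 1)] with t ht
    exact hL.1 u hu t ht
  exact h1.unique h2

lemma Econtdiff (hL : IsFinslerMinkowski n L) {u : Fin n → ℝ} (hu : u ≠ 0) :
    ContDiffAt ℝ 2 (fun w => L w ^ 2 / 2) u := by
  exact (((hL.2.2.1 u hu).pow 2).div_const 2).of_le (by norm_num)

lemma hasFDerivE (hL : IsFinslerMinkowski n L) {u : Fin n → ℝ} (hu : u ≠ 0) :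
    HasFDerivAt (fun w => L w ^ 2 / 2) (L u • fderiv ℝ L u) u := by
  have hf := (ldiff hL hu).hasFDerivAt
  have h2 : (fun w => L w ^ 2 / 2) = fun y => 2⁻¹ * (L y * L y) := by funext w; ring
  rw [h2]
  refine ((hf.mul hf).const_mul 2⁻¹).congr_fderiv ?_
  ext w
  simp
  ring

lemma gmet_quad {u : Fin n → ℝ}
    (hE2 : ContDiffAt ℝ 2 (fun w => L w ^ 2 / 2) u) (d : Fin n → ℝ) :
    (∀ w, HasFDerivAt (fun x => fderiv ℝ (fun w' => L w' ^ 2 / 2) x w)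
      ((ContinuousLinearMap.apply ℝ ℝ w).comp (fderiv ℝ (fderiv ℝ (fun w' => L w' ^ 2 / 2)) u)) u) ∧
    fderiv ℝ (fun x => fderiv ℝ (fun w' => L w' ^ 2 / 2) x d) u d
      = ∑ i, ∑ j, d i * d j * gmet n L u i j := by
  set E := fun w => L w ^ 2 / 2 with hE
  have hC1 : ContDiffAt ℝ 1 (fderiv ℝ E) u := hE2.fderiv_right (m := 1) (by norm_num)
  have hdiff : DifferentiableAt ℝ (fderiv ℝ E) u := hC1.differentiableAt one_ne_zero
  set B := fderiv ℝ (fderiv ℝ E) u with hBdef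
  have hB : HasFDerivAt (fderiv ℝ E) B u := hdiff.hasFDerivAt
  have key : ∀ w, HasFDerivAt (fun x => fderiv ℝ E x w)
      ((ContinuousLinearMap.apply ℝ ℝ w).comp B) u :=
    fun w => (ContinuousLinearMap.apply ℝ ℝ w).hasFDerivAt.comp u hB
  refine ⟨key, ?_⟩
  have hgm : ∀ i j, gmet n L u i j = B (Pi.single j 1) (Pi.single i 1) := by
    intro i j
    have := (key (Pi.single i 1)).fderiv
    simp only [gmet]
    rw [this]
    rfl
  rw [(key d).fderiv]
  have h1 : ((ContinuousLinearMap.apply ℝ ℝ d).comp B) d = B d d := rfl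
  rw [h1, clm_eq_sum (B d) d]
  refine Finset.sum_congr rfl fun i _ => ?_
  have h2 : B d (Pi.single i 1) = ((ContinuousLinearMap.apply ℝ ℝ (Pi.single i 1)).comp B) d := rfl
  rw [h2, clm_eq_sum _ d, Finset.mul_sum]
  refine Finset.sum_congr rfl fun j _ => ?_
  rw [hgm i j]
  have : ((ContinuousLinearMap.apply ℝ ℝ (Pi.single i 1)).comp B) (Pi.single j 1)
      = B (Pi.single j 1) (Pi.single i 1) := rfl
  rw [this]
  ring

lemma grad_le (hL : IsFinslerMinkowski n L) {ρ w : Fin n → ℝ} (hρ : ρ ≠ 0) (hw : w ≠ 0)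
    (hLρ : L ρ = 1) (hLw : L w = 1) : fderiv ℝ L ρ w ≤ 1 := by
  by_cases hwρ : w = ρ
  · rw [hwρ, euler hL hρ, hLρ]
  set d := w - ρ with hd
  have hdne : d ≠ 0 := sub_ne_zero.mpr hwρ
  set c : ℝ → (Fin n → ℝ) := fun t => ρ + t • d with hc
  by_cases hzero : ∃ t ∈ Icc (0:ℝ) 1, c t = 0
  · obtain ⟨t, ht, hct⟩ := hzero
    have ht0 : t ≠ 0 := by
      rintro rfl; simp [hc] at hct; exact hρ hct
    have hw_eq : w = (-(1 - t) / t) • ρ := by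
      have h1 : t • w = -((1 - t) • ρ) := by
        have h : ρ + t • (w - ρ) = 0 := hct
        linear_combination (norm := module) h
      have h3 : w = t⁻¹ • (t • w) := by
        rw [smul_smul, inv_mul_cancel₀ ht0, one_smul]
      rw [h3, h1]
      module
    have hcoef : -(1 - t) / t ≤ 0 := by
      have h1 : 0 < t := lt_of_le_of_ne ht.1 (Ne.symm ht0)
      have h2 : t ≤ 1 := ht.2
      have : 0 ≤ (1 - t) / t := div_nonneg (by linarith) (le_of_lt h1)
      rw [neg_div]; linarith
    rw [hw_eq, _root_.map_smul]
    rw [euler hL hρ, hLρ]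
    simp only [smul_eq_mul, mul_one]
    linarith
  push_neg at hzero
  set E : (Fin n → ℝ) → ℝ := fun x => L x ^ 2 / 2 with hE
  set φ : ℝ → ℝ := fun t => E (c t) with hφ
  set ψ : ℝ → ℝ := fun t => fderiv ℝ E (c t) d with hψ
  have hcd : ∀ t : ℝ, HasDerivAt c d t := by
    intro t
    have := ((hasDerivAt_id t).smul_const d).const_add ρ
    simpa [hc] using this
  have hccont : Continuous c := by
    fun_prop
  have hφ' : ∀ t ∈ Icc (0:ℝ) 1, HasDerivAt φ (ψ t) t := by
    intro t ht
    have hEd : HasFDerivAt E (fderiv ℝ E (c t)) (c t) :=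
      (((Econtdiff hL (hzero t ht)).differentiableAt (by norm_num))).hasFDerivAt
    exact hEd.comp_hasDerivAt t (hcd t)
  have hφcont : ContinuousOn φ (Icc 0 1) :=
    fun t ht => ((hφ' t ht).continuousAt).continuousWithinAt
  have hψcont : ContinuousOn ψ (Icc 0 1) := by
    intro t ht
    have h1 : ContinuousAt (fun x => fderiv ℝ E x) (c t) :=
      ((Econtdiff hL (hzero t ht)).fderiv_right (m := 1) (by norm_num)).continuousAt.congr
        (by rfl)
    have h2 : ContinuousAt (fun s : ℝ => fderiv ℝ E (c s)) t :=
      h1.comp (hccont.continuousAt)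
    exact (((ContinuousLinearMap.apply ℝ ℝ d).continuous.continuousAt.comp h2)).continuousWithinAt
  have hψ' : ∀ t ∈ Ioo (0:ℝ) 1, HasDerivAt ψ
      (fderiv ℝ (fun x => fderiv ℝ E x d) (c t) d) t := by
    intro t ht
    have htI : t ∈ Icc (0:ℝ) 1 := Ioo_subset_Icc_self ht
    have hne := hzero t htI
    have hkey := (gmet_quad (Econtdiff hL hne) d).1 d
    have := hkey.comp_hasDerivAt t (hcd t)
    rw [hkey.fderiv]
    exact this
  have hψpos : ∀ t ∈ Ioo (0:ℝ) 1, 0 < deriv ψ t := by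
    intro t ht
    rw [(hψ' t ht).deriv]
    have hne := hzero t (Ioo_subset_Icc_self ht)
    rw [(gmet_quad (Econtdiff hL hne) d).2]
    exact hL.2.2.2 (c t) hne d hdne
  have hmono : StrictMonoOn ψ (Icc 0 1) :=
    strictMonoOn_of_deriv_pos (convex_Icc 0 1) hψcont
      (fun t ht => hψpos t (by rwa [interior_Icc] at ht))
  obtain ⟨ξ, hξ, hslope⟩ := exists_hasDerivAt_eq_slope φ ψ one_pos hφcont
    (fun t ht => hφ' t (Ioo_subset_Icc_self ht))
  have hc0 : c 0 = ρ := by simp [hc]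
  have hc1 : c 1 = w := by simp [hc, hd]
  have hφ0 : φ 0 = 1/2 := by simp [hφ, hE, hc0, hLρ]
  have hφ1 : φ 1 = 1/2 := by simp [hφ, hE, hc1, hLw]
  have hslope0 : ψ ξ = 0 := by rw [hslope, hφ0, hφ1]; norm_num
  have hψ0 : ψ 0 < ψ ξ :=
    hmono (left_mem_Icc.mpr zero_le_one) (Ioo_subset_Icc_self hξ) hξ.1
  have hψ0val : ψ 0 = fderiv ℝ L ρ w - 1 := by
    have h1 : fderiv ℝ E ρ = L ρ • fderiv ℝ L ρ := (hasFDerivE hL hρ).fderiv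
    simp only [hψ, hc0, h1, hLρ, one_smul]
    rw [hd, map_sub, euler hL hρ, hLρ]
  rw [hslope0] at hψ0
  rw [hψ0val] at hψ0
  linarith

lemma exists_upper (hL : IsFinslerMinkowski n L) {v : Fin n → ℝ} (hv : v ≠ 0) :
    ∃ M : ℝ, 0 < M ∧ ∀ u : Fin n → ℝ, u ≠ 0 → L u ≤ M * ‖u‖ := by
  have hvs : ‖v‖⁻¹ • v ∈ Metric.sphere (0 : Fin n → ℝ) 1 := by
    have : ‖v‖ ≠ 0 := norm_ne_zero_iff.mpr hv
    simp [norm_smul, abs_of_nonneg (inv_nonneg.mpr (norm_nonneg v)),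
      inv_mul_cancel₀ this]
  have hcont : ContinuousOn L (Metric.sphere (0 : Fin n → ℝ) 1) := by
    intro u hu
    have hune : u ≠ 0 := by
      intro h
      rw [h] at hu
      simp at hu
    exact ((hL.2.2.1 u hune).continuousAt).continuousWithinAt
  obtain ⟨u0, _, hmax⟩ := (isCompact_sphere (0 : Fin n → ℝ) 1).exists_isMaxOn
    ⟨_, hvs⟩ hcont
  refine ⟨max (L u0) 1, lt_of_lt_of_le one_pos (le_max_right _ _), fun u hu => ?_⟩
  have hnu : ‖u‖ ≠ 0 := norm_ne_zero_iff.mpr hu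
  have hnupos : 0 < ‖u‖ := norm_pos_iff.mpr hu
  have hmem : ‖u‖⁻¹ • u ∈ Metric.sphere (0 : Fin n → ℝ) 1 := by
    simp [norm_smul, abs_of_nonneg (inv_nonneg.mpr (norm_nonneg u)),
      inv_mul_cancel₀ hnu]
  have hne : ‖u‖⁻¹ • u ≠ 0 := smul_ne_zero (inv_ne_zero hnu) hu
  have h1 : L u = ‖u‖ * L (‖u‖⁻¹ • u) := by
    rw [← hL.1 _ hne ‖u‖ hnupos, smul_inv_smul₀ hnu]
  rw [h1]
  have h2 : L (‖u‖⁻¹ • u) ≤ max (L u0) 1 := le_trans (isMaxOn_iff.mp hmax _ hmem) (le_max_left _ _)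
  nlinarith [norm_nonneg u]

end Aux

/-- along the projection `ρ(v_p) = p + v/F(v_p) ∈ ∂K` of the Funk
space one has `∂L/∂uⁱ ∘ ρ = (1 − xᵏ ∂L/∂uᵏ ∘ ρ) · ∂F/∂yⁱ`, and the factor
`1 − xᵏ ∂L/∂uᵏ ∘ ρ` is strictly positive. -/
theorem funk_projection_gradient_relation
    (n : ℕ) (L : (Fin n → ℝ) → ℝ) (hL : IsFinslerMinkowski n L)
    (F : (Fin n → ℝ) × (Fin n → ℝ) → ℝ)
    (hFpos : ∀ p ∈ interior {u : Fin n → ℝ | L u ≤ 1}, ∀ v : Fin n → ℝ, v ≠ 0 →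
      0 < F (p, v))
    (hFdef : ∀ p ∈ interior {u : Fin n → ℝ | L u ≤ 1}, ∀ v : Fin n → ℝ, v ≠ 0 →
      L (p + (F (p, v))⁻¹ • v) = 1)
    (hFsmooth : ∀ p ∈ interior {u : Fin n → ℝ | L u ≤ 1}, ∀ v : Fin n → ℝ, v ≠ 0 →
      ContDiffAt ℝ 1 F (p, v))
    (p : Fin n → ℝ) (hp : p ∈ interior {u : Fin n → ℝ | L u ≤ 1})
    (v : Fin n → ℝ) (hv : v ≠ 0)
    (ρ : Fin n → ℝ) (hρ : ρ = p + (F (p, v))⁻¹ • v) :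
    (∀ i : Fin n,
      fderiv ℝ L ρ (Pi.single i 1) =
        (1 - ∑ k, p k * fderiv ℝ L ρ (Pi.single k 1)) *
          fderiv ℝ (fun y => F (p, y)) v (Pi.single i 1)) ∧
    0 < 1 - ∑ k, p k * fderiv ℝ L ρ (Pi.single k 1) := by
  classical
  set K := {u : Fin n → ℝ | L u ≤ 1} with hK
  have hFv : 0 < F (p, v) := hFpos p hp v hv
  have hFne : F (p, v) ≠ 0 := ne_of_gt hFv
  have hLρ1 : L ρ = 1 := by rw [hρ]; exact hFdef p hp v hv
  obtain ⟨M, hMpos, hM⟩ := exists_upper hL hv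
  -- ρ ≠ 0
  have hρne : ρ ≠ 0 := by
    intro hρ0
    have hL0 : L 0 = 1 := by rw [← hρ0]; exact hLρ1
    have hball : Metric.ball (0 : Fin n → ℝ) M⁻¹ ⊆ K := by
      intro u hu
      have hu' : ‖u‖ < M⁻¹ := by simpa [dist_zero_right] using hu
      rcases eq_or_ne u 0 with rfl | hune
      · exact le_of_eq hL0
      · have h1 : L u ≤ M * ‖u‖ := hM u hune
        have h2 : M * ‖u‖ < M * M⁻¹ := by
          exact mul_lt_mul_of_pos_left hu' hMpos
        rw [mul_inv_cancel₀ (ne_of_gt hMpos)] at h2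
        exact le_of_lt (lt_of_le_of_lt h1 h2)
    have h0int : (0 : Fin n → ℝ) ∈ interior K :=
      mem_interior.mpr ⟨_, hball, Metric.isOpen_ball, Metric.mem_ball_self (inv_pos.mpr hMpos)⟩
    have hstar : ∀ s : ℝ, 0 < s → s ≤ 1 → ∀ q, q ∈ interior K → s • q ∈ interior K := by
      intro s hs hs1 q hq
      refine mem_interior.mpr ⟨s • interior K, ?_, isOpen_interior.smul₀ (ne_of_gt hs),
        Set.smul_mem_smul_set hq⟩
      rintro x ⟨y, hy, rfl⟩
      have hyK : L y ≤ 1 := by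
        have := interior_subset hy
        simpa [hK] using this
      rcases eq_or_ne y 0 with rfl | hyne
      · show L (s • (0 : Fin n → ℝ)) ≤ 1
        rw [smul_zero]
        exact le_of_eq hL0
      · show L (s • y) ≤ 1
        rw [hL.1 y hyne s hs]
        nlinarith [hL.2.1 y hyne]
    set c1 : ℝ → (Fin n → ℝ) := fun t => (1 - t) • p with hc1
    have hc1mem : ∀ t ∈ Icc (0:ℝ) 1, c1 t ∈ interior K := by
      intro t ht
      rcases eq_or_lt_of_le ht.2 with h | h
      · have : c1 t = 0 := by simp [hc1, ← h]
        rw [this]; exact h0int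
      · exact hstar (1 - t) (by linarith) (by linarith [ht.1]) p hp
    set ρt : ℝ → (Fin n → ℝ) := fun t => c1 t + (F (c1 t, v))⁻¹ • v with hρt
    have hLρt : ∀ t ∈ Icc (0:ℝ) 1, L (ρt t) = 1 := fun t ht => hFdef _ (hc1mem t ht) v hv
    have hFc : ∀ t ∈ Icc (0:ℝ) 1, 0 < F (c1 t, v) := fun t ht => hFpos _ (hc1mem t ht) v hv
    have hc1cont : Continuous c1 := by fun_prop
    have hFcont : ContinuousOn (fun t => F (c1 t, v)) (Icc (0:ℝ) 1) := by
      intro t ht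
      have h1 : ContinuousAt (fun t : ℝ => ((c1 t, v) : (Fin n → ℝ) × (Fin n → ℝ))) t :=
        (hc1cont.prodMk continuous_const).continuousAt
      have h2 : ContinuousAt F (c1 t, v) := (hFsmooth _ (hc1mem t ht) v hv).continuousAt
      have h3 : ContinuousAt (fun s : ℝ => F (c1 s, v)) t :=
        ContinuousAt.comp (f := fun s : ℝ => ((c1 s, v) : (Fin n → ℝ) × (Fin n → ℝ)))
          (x := t) h2 h1
      exact h3.continuousWithinAt
    have hcont : ContinuousOn (fun t => ‖ρt t‖) (Icc (0:ℝ) 1) := by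
      refine ContinuousOn.norm ?_
      exact (hc1cont.continuousOn).add
        ((hFcont.inv₀ (fun t ht => ne_of_gt (hFc t ht))).smul continuousOn_const)
    have hg0 : ‖ρt 0‖ = 0 := by
      have h1 : ρt 0 = ρ := by
        simp [hρt, hc1, hρ]
      rw [h1, hρ0, norm_zero]
    have hg1pos : 0 < ‖ρt 1‖ := by
      have h1 : ρt 1 = (F ((0 : Fin n → ℝ), v))⁻¹ • v := by
        simp [hρt, hc1]
      rw [h1, norm_smul]
      have hF1 : 0 < F ((0 : Fin n → ℝ), v) := by
        have := hFc 1 (right_mem_Icc.mpr zero_le_one)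
        simpa [hc1] using this
      have : |(F ((0 : Fin n → ℝ), v))⁻¹| > 0 := abs_pos.mpr (inv_ne_zero (ne_of_gt hF1))
      exact mul_pos this (norm_pos_iff.mpr hv)
    set gv := min (M⁻¹ / 2) (‖ρt 1‖ / 2) with hgv
    have hgvpos : 0 < gv := lt_min (by positivity) (by positivity)
    have hgvmem : gv ∈ Icc ‖ρt 0‖ ‖ρt 1‖ := by
      constructor
      · rw [hg0]; exact le_of_lt hgvpos
      · exact le_trans (min_le_right _ _) (by linarith)
    obtain ⟨t, htI, hgt⟩ := intermediate_value_Icc zero_le_one hcont hgvmem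
    have hgt' : ‖ρt t‖ = gv := hgt
    have h1 : ρt t ≠ 0 := by
      intro h
      rw [h, norm_zero] at hgt'
      exact absurd hgt'.symm (ne_of_gt hgvpos)
    have h2 : L (ρt t) ≤ M * ‖ρt t‖ := hM _ h1
    rw [hLρt t htI, hgt'] at h2
    have h3 : gv ≤ M⁻¹ / 2 := min_le_left _ _
    have h4 : M * gv ≤ M * (M⁻¹ / 2) := mul_le_mul_of_nonneg_left h3 (le_of_lt hMpos)
    have h5 : M * (M⁻¹ / 2) = 1 / 2 := by field_simp
    linarith
  -- Differentiation
  set a := fderiv ℝ L ρ with ha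
  have haρ : a ρ = 1 := by rw [ha, euler hL hρne, hLρ1]
  have hFy : ContDiffAt ℝ 1 (fun y => F (p, y)) v :=
    (hFsmooth p hp v hv).comp v (contDiffAt_const.prodMk contDiffAt_id)
  set Fy := fderiv ℝ (fun y => F (p, y)) v with hFyd_def
  have hFyd : HasFDerivAt (fun y => F (p, y)) Fy v :=
    (hFy.differentiableAt one_ne_zero).hasFDerivAt
  have hap : a p = ∑ k, p k * a (Pi.single k 1) := clm_eq_sum a p
  -- key directional identity
  have hkey : ∀ i : Fin n, (F (p, v))⁻¹ * a (Pi.single i 1)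
      - Fy (Pi.single i 1) / F (p, v) ^ 2 * a v = 0 := by
    intro i
    set e := (Pi.single i 1 : Fin n → ℝ) with he
    set γ : ℝ → (Fin n → ℝ) := fun s => p + (F (p, v + s • e))⁻¹ • (v + s • e) with hγ
    have hcurve : ∀ s : ℝ, HasDerivAt (fun s : ℝ => v + s • e) e s := by
      intro s
      simpa using ((hasDerivAt_id s).smul_const e).const_add v
    have hF0 : HasDerivAt (fun s : ℝ => F (p, v + s • e)) (Fy e) 0 := by
      have hb : HasFDerivAt (fun y => F (p, y)) Fy ((fun s : ℝ => v + s • e) 0) := by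
        simpa using hFyd
      exact hb.comp_hasDerivAt (0:ℝ) (hcurve 0)
    have hinv : HasDerivAt (fun s : ℝ => (F (p, v + s • e))⁻¹)
        (-(Fy e) / F (p, v) ^ 2) 0 := by
      have h := hF0.inv (by simpa using hFne)
      rw [zero_smul, add_zero] at h
      exact h
    have hsmul : HasDerivAt (fun s : ℝ => (F (p, v + s • e))⁻¹ • (v + s • e))
        ((F (p, v))⁻¹ • e + (-(Fy e) / F (p, v) ^ 2) • v) 0 := by
      have h := hinv.smul (hcurve 0)
      rw [zero_smul, add_zero] at h
      exact h
    have hγ' : HasDerivAt γ ((F (p, v))⁻¹ • e + (-(Fy e) / F (p, v) ^ 2) • v) 0 :=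
      hsmul.const_add p
    have hLd : HasFDerivAt L a (γ 0) := by
      have : γ 0 = ρ := by simp [hγ, hρ]
      rw [this, ha]
      exact (ldiff hL hρne).hasFDerivAt
    have hcomp : HasDerivAt (fun s => L (γ s))
        (a ((F (p, v))⁻¹ • e + (-(Fy e) / F (p, v) ^ 2) • v)) 0 :=
      hLd.comp_hasDerivAt 0 hγ'
    have hconst : HasDerivAt (fun s => L (γ s)) 0 0 := by
      refine (hasDerivAt_const (0:ℝ) (1:ℝ)).congr_of_eventuallyEq ?_
      have hne0 : ∀ᶠ s : ℝ in nhds 0, v + s • e ≠ 0 := by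
        have hco : ContinuousAt (fun s : ℝ => v + s • e) 0 := by fun_prop
        have ht : Filter.Tendsto (fun s : ℝ => v + s • e) (nhds 0) (nhds v) := by
          simpa using hco.tendsto
        exact ht.eventually (eventually_ne_nhds hv)
      filter_upwards [hne0] with s hs
      exact hFdef p hp _ hs
    have h5 := hcomp.unique hconst
    rw [map_add, _root_.map_smul, _root_.map_smul, smul_eq_mul, smul_eq_mul] at h5
    linear_combination h5
  -- Euler along ρ
  have haomg : a p + (F (p, v))⁻¹ * a v = 1 := by
    rw [← haρ, hρ, map_add, _root_.map_smul, smul_eq_mul]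
  have hSab : (F (p, v))⁻¹ * a v = 1 - ∑ k, p k * a (Pi.single k 1) := by
    rw [← hap]; linarith
  constructor
  · intro i
    rw [← hSab]
    have hk := hkey i
    have hF2 : F (p, v) ^ 2 ≠ 0 := pow_ne_zero 2 hFne
    field_simp at hk
    show a (Pi.single i 1) = (F (p, v))⁻¹ * a v * Fy (Pi.single i 1)
    have hk2 : F (p, v) * (a (Pi.single i 1) * F (p, v))
        = F (p, v) * (Fy (Pi.single i 1) * a v) := by linear_combination F (p, v) * hk
    have hk3 := mul_left_cancel₀ hFne hk2
    field_simp
    linear_combination hk3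
  · rw [← hap]
    by_cases hp0 : p = 0
    · rw [hp0, map_zero]; norm_num
    · have hpK : L p ≤ 1 := by
        have := interior_subset hp
        simpa [hK] using this
      have hKn : K ∈ nhds p := mem_interior_iff_mem_nhds.mp hp
      obtain ⟨ε, hε, hball⟩ := Metric.mem_nhds_iff.mp hKn
      have hnp : 0 < ‖p‖ := norm_pos_iff.mpr hp0
      set δ := ε / (2 * ‖p‖) with hδdef
      have hδ : 0 < δ := by positivity
      have hmem : (1 + δ) • p ∈ Metric.ball p ε := by
        have h1 : (1 + δ) • p - p = δ • p := by module
        rw [Metric.mem_ball, dist_eq_norm, h1, norm_smul, Real.norm_eq_abs,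
          abs_of_pos hδ, hδdef]
        have h2 : ε / (2 * ‖p‖) * ‖p‖ = ε / 2 := by
          field_simp
        rw [h2]
        linarith
      have h1 : L ((1 + δ) • p) = (1 + δ) * L p := hL.1 p hp0 _ (by positivity)
      have h2 : L ((1 + δ) • p) ≤ 1 := hball hmem
      have hLppos : 0 < L p := hL.2.1 p hp0
      have hLp1 : L p < 1 := by nlinarith
      have hwmem : L ((L p)⁻¹ • p) = 1 := by
        rw [hL.1 p hp0 _ (inv_pos.mpr hLppos)]
        field_simp
      have hwne : (L p)⁻¹ • p ≠ 0 := smul_ne_zero (inv_ne_zero (ne_of_gt hLppos)) hp0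
      have hgl : a ((L p)⁻¹ • p) ≤ 1 := grad_le hL hρne hwne hLρ1 hwmem
      rw [_root_.map_smul, smul_eq_mul] at hgl
      have hap1 : a p ≤ L p := by
        have := mul_le_mul_of_nonneg_left hgl (le_of_lt hLppos)
        rw [← mul_assoc, mul_inv_cancel₀ (ne_of_gt hLppos), one_mul, mul_one] at this
        exact this
      linarith
end
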